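/- arXiv:1809.08220 — 2 statements merged into one kernel-verified Lean document; each statement's English description precedes it below -/
import Mathlib

section
/- Let G be a disconnected graph of order n all of whose connected components are non-trivial (have at least 2 vertices), and let G₁ be a component of minimum order k. Then the set V(G∘Ḡ) \ V(G₁), i.e., all vertices of the complementary prism except the vertices of G₁ on the G-side, is a convex set of G∘Ḡ in the geodetic convexity. -/
open SimpleGraph

/-- The complementary prism `G ∘ Ḡ`: left copies (`Sum.inl`) form `G`,
right copies (`Sum.inr`) form the complement `Gᶜ`, and each `inl v` is
matched to `inr v`. -/
def compPrism {V : Type*} (G : SimpleGraph V) : SimpleGraph (V ⊕ V) where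
  Adj x y :=
    match x, y with
    | Sum.inl a, Sum.inl b => G.Adj a b
    | Sum.inr a, Sum.inr b => Gᶜ.Adj a b
    | Sum.inl a, Sum.inr b => a = b
    | Sum.inr a, Sum.inl b => a = b
  symm := ⟨by
    rintro (a | a) (b | b) h <;> simp_all [compl_adj, adj_comm, eq_comm]⟩
  loopless := ⟨by
    rintro (a | a) h <;> simp_all⟩

/-- `v` lies on some shortest `u`-`w` path in `G`. -/
def inInterval {V : Type*} (G : SimpleGraph V) (u w v : V) : Prop :=
  ∃ p : G.Walk u w, p.IsPath ∧ p.length = G.dist u w ∧ v ∈ p.support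

/-- A set is geodesically convex if it contains every vertex on any shortest
path between two of its vertices. -/
def IsGeodConvex {V : Type*} (G : SimpleGraph V) (S : Set V) : Prop :=
  ∀ u ∈ S, ∀ w ∈ S, ∀ v, inInterval G u w v → v ∈ S

/-- The geodesic convex hull of a set of vertices. -/
def geodHull {V : Type*} (G : SimpleGraph V) (S : Set V) : Set V :=
  ⋂₀ {T | S ⊆ T ∧ IsGeodConvex G T}

/-- The convexity number: the maximum cardinality of a proper convex set. -/
noncomputable def convexityNumber {V : Type*} (G : SimpleGraph V) : ℕ :=
  sSup {n | ∃ S : Set V, IsGeodConvex G S ∧ S ≠ Set.univ ∧ S.ncard = n}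


/-!
Suppose a shortest path between two vertices outside the left copy of the component `c₀` passed
through the left copy of some `a ∈ c₀`. On each side of `a` the path can only leave the left copy
of `c₀` through a matching edge, say at `inl x – inr x` and `inl y – inr y`, so between `inr x` and
`inr y` it has length at least `dist_G(x, y) + 2`. But `x = y`, or else both are adjacent in `Ḡ` to
a vertex `z` outside `c₀` (which exists as `G` is disconnected), so `inr x` and `inr y` are joined
by a walk of length at most `dist_G(x, y) + 1`, a shortcut.
-/

namespace SimpleGraph

variable {V : Type*} {G : SimpleGraph V}

lemma exists_not_reachable_of_not_preconnected (h : ¬G.Preconnected) (a : V) :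
    ∃ z, ¬G.Reachable a z := by
  by_contra! hall
  exact h fun u v => (hall u).symm.trans (hall v)

lemma compl_adj_of_not_reachable {x z : V} (h : ¬G.Reachable x z) : Gᶜ.Adj x z :=
  ⟨fun hxz => h (hxz ▸ Reachable.refl x), fun hadj => h hadj.reachable⟩

end SimpleGraph

namespace compPrism

variable {V : Type*} {G : SimpleGraph V}

lemma adj_inl_inl {a b : V} : (compPrism G).Adj (.inl a) (.inl b) ↔ G.Adj a b := Iff.rfl

lemma adj_inr_inr {a b : V} : (compPrism G).Adj (.inr a) (.inr b) ↔ Gᶜ.Adj a b := Iff.rfl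

lemma adj_inl_inr {a b : V} : (compPrism G).Adj (.inl a) (.inr b) ↔ a = b := Iff.rfl

/-- A walk that starts in the left copy of the component of `a` and ends outside it leaves
through a matching edge `inl x – inr x`. -/
theorem exists_exit_of_walk_inl :
    ∀ {a : V} {t : V ⊕ V} (r : (compPrism G).Walk (.inl a) t),
      (∀ b, G.Reachable a b → t ≠ .inl b) →
      ∃ x, ∃ q : G.Walk a x, ∃ r' : (compPrism G).Walk (.inr x) t,
        r.length = q.length + 1 + r'.length
  | a, _, .nil, ht => absurd rfl (ht a .rfl)
  | a, _, .cons (v := .inl b) hab r, ht => by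
    have hab : G.Adj a b := adj_inl_inl.mp hab
    obtain ⟨x, q, r', hlen⟩ :=
      exists_exit_of_walk_inl r fun c hbc => ht c (hab.reachable.trans hbc)
    exact ⟨x, .cons hab q, r', by simp only [Walk.length_cons, hlen]; omega⟩
  | a, _, .cons (v := .inr b) hab r, _ => by
    obtain rfl : a = b := adj_inl_inr.mp hab
    exact ⟨a, .nil, r, by simp only [Walk.length_cons, Walk.length_nil]; omega⟩

/-- Within a component of `G`, a vertex `z` outside it is a common neighbour in `Ḡ`. -/
lemma exists_walk_inr_length_le {x y z : V} (hxy : G.Reachable x y) (hxz : ¬G.Reachable x z) :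
    ∃ m : (compPrism G).Walk (.inr x) (.inr y), m.length ≤ G.dist x y + 1 := by
  by_cases hne : x = y
  · subst hne
    exact ⟨.nil, by simp⟩
  have hyz : ¬G.Reachable y z := fun hyz => hxz (hxy.trans hyz)
  have hzy : Gᶜ.Adj z y := (compl_adj_of_not_reachable hyz).symm
  refine ⟨.cons (adj_inr_inr.mpr (compl_adj_of_not_reachable hxz))
    (.cons (adj_inr_inr.mpr hzy) .nil), ?_⟩
  have := hxy.pos_dist_of_ne hne
  simp only [Walk.length_cons, Walk.length_nil]
  omega

end compPrism

theorem stmt1_general {V : Type*} (G : SimpleGraph V)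
    (hdisc : ¬G.Preconnected)
    (c₀ : G.ConnectedComponent) :
    IsGeodConvex (compPrism G) (Set.univ \ (Sum.inl '' c₀.supp)) := by
  rintro u ⟨-, hu⟩ w ⟨-, hw⟩ v ⟨p, -, hp, hv⟩
  refine ⟨Set.mem_univ v, ?_⟩
  rintro ⟨a, ha, rfl⟩
  have houtside {t : V ⊕ V} (ht : t ∉ Sum.inl '' c₀.supp) (b : V) (hab : G.Reachable a b) :
      t ≠ .inl b := by
    rintro rfl
    exact ht ⟨b, (ConnectedComponent.sound hab).symm.trans ha, rfl⟩
  obtain ⟨q₁, q₂, rfl⟩ := Walk.mem_support_iff_exists_append.mp hv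
  obtain ⟨x, qx, r₁, hlen₁⟩ := compPrism.exists_exit_of_walk_inl q₁.reverse (houtside hu)
  obtain ⟨y, qy, r₂, hlen₂⟩ := compPrism.exists_exit_of_walk_inl q₂ (houtside hw)
  obtain ⟨z, haz⟩ := exists_not_reachable_of_not_preconnected hdisc a
  obtain ⟨m, hm⟩ := compPrism.exists_walk_inr_length_le (qx.reverse.append qy).reachable
    fun hxz => haz (qx.reachable.trans hxz)
  have hxy := dist_le (qx.reverse.append qy)
  have hshortcut := dist_le (r₁.reverse.append (m.append r₂))
  simp only [Walk.length_append, Walk.length_reverse] at hp hlen₁ hxy hshortcut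
  omega

theorem stmt1 {V : Type*} [Fintype V] (G : SimpleGraph V)
    (hdisc : ¬G.Preconnected)
    (hnt : ∀ c : G.ConnectedComponent, 2 ≤ c.supp.ncard)
    (c₀ : G.ConnectedComponent)
    (hmin : ∀ c : G.ConnectedComponent, c₀.supp.ncard ≤ c.supp.ncard) :
    IsGeodConvex (compPrism G) (Set.univ \ (Sum.inl '' c₀.supp)) :=
  stmt1_general G hdisc c₀
end

section
/- Let G be a disconnected graph of order n and let k be the minimum order of a connected component of G. Then the convexity number of the complementary prism G∘Ḡ equals 2n − k, i.e., the maximum cardinality of a proper convex set of G∘Ḡ in the geodetic convexity is 2n − k. -/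
/-!
If `G` is disconnected, `Ḡ` has diameter at most two and `G ∘ Ḡ` diameter at most three. The
only neighbour of the copy of a vertex `x` outside the copy of its component `C` is `x̄`, and
geodesics are too short to pass through `x` unless both their ends are `x̄`. So removing the copy
of a smallest component leaves a convex set of size `2n - k`.

Conversely, let `S` be a proper convex set and call `x` inside if its copy in `G` lies in `S`.
If some component has no inside vertex, `S` misses at least `k` vertices. Otherwise the geodesic
`x, x̄, ȳ, y` between inside vertices of different components puts `x̄` into `S`. It follows that
the inside vertices are independent in `G`, that no outside vertex has two inside neighbours, and
that `ȳ ∉ S` for every outside neighbour `y` of an inside vertex. Sending each inside `x` to `ȳ`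
for a neighbour `y`, and each outside `x` to its copy in `G`, then embeds `V` into the complement
of `S` (an isolated vertex makes `k = 1`).
-/

open SimpleGraph

namespace SimpleGraph

variable {V : Type*} {G : SimpleGraph V}

lemma exists_not_reachable_of_not_preconnected_s2 (hG : ¬G.Preconnected) (x : V) :
    ∃ y, ¬G.Reachable x y := by
  by_contra! h
  exact hG fun u v => (h u).symm.trans (h v)

lemma IsIsolated.connectedComponentMk_supp {v : V} (hv : G.IsIsolated v) :
    (G.connectedComponentMk v).supp = {v} := by
  ext w
  rw [ConnectedComponent.mem_supp_iff, ConnectedComponent.eq, Set.mem_singleton_iff]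
  refine ⟨fun ⟨p⟩ => ?_, fun h => h ▸ .rfl⟩
  by_contra hne
  exact hv _ (p.reverse.adj_snd (Walk.not_nil_of_ne (Ne.symm hne)))

lemma dist_le_two_of_adj_of_adj {u m w : V} (h₁ : G.Adj u m) (h₂ : G.Adj m w) :
    G.dist u w ≤ 2 := by
  simpa using dist_le (.cons h₁ (.cons h₂ .nil))

end SimpleGraph

namespace SimpleGraph.Walk

variable {W : Type*} {H : SimpleGraph W} {u w v : W}

lemma mem_support_of_length_le_two :
    ∀ (p : H.Walk u w), p.length ≤ 2 → v ∈ p.support →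
      v = u ∨ v = w ∨ H.Adj u v ∧ H.Adj v w
  | .nil, _, hv => by simp_all
  | .cons _ .nil, _, hv => by simp at hv; exact hv.imp_right .inl
  | .cons h (.cons h' .nil), _, hv => by
    simp only [support_cons, support_nil, List.mem_cons, List.not_mem_nil, or_false] at hv
    rcases hv with rfl | rfl | rfl <;> simp_all
  | .cons _ (.cons _ (.cons _ _)), hp, _ => by simp at hp

lemma mem_support_of_length_le_three (p : H.Walk u w) (hp : p.length ≤ 3)
    (hv : v ∈ p.support) : v = u ∨ v = w ∨ H.Adj u v ∨ H.Adj v w := by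
  cases p with
  | nil => simp_all
  | cons h q =>
    rw [support_cons, List.mem_cons] at hv
    rcases hv with rfl | hv
    · exact .inl rfl
    rcases q.mem_support_of_length_le_two (by simp at hp; omega) hv with rfl | rfl | ⟨-, h'⟩
    · exact .inr <| .inr <| .inl h
    · exact .inr <| .inl rfl
    · exact .inr <| .inr <| .inr h'

end SimpleGraph.Walk

section Interval

variable {W : Type*} {H : SimpleGraph W} {u m m' w : W}

lemma inInterval_of_length_eq_dist (p : H.Walk u w) (hp : p.length = H.dist u w)
    (hm : m ∈ p.support) : inInterval H u w m :=
  ⟨p, p.isPath_of_length_eq_dist hp, hp, hm⟩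

lemma inInterval_of_adj_of_adj (h₁ : H.Adj u m) (h₂ : H.Adj m w) (hne : u ≠ w)
    (hna : ¬H.Adj u w) : inInterval H u w m := by
  let p : H.Walk u w := .cons h₁ (.cons h₂ .nil)
  have hdist : H.dist u w = 2 := by
    have := p.reachable.coe_dist_eq_edist
    rw [edist_eq_two_iff.mpr ⟨hne, hna, m, h₁, h₂.symm⟩] at this
    exact_mod_cast this
  exact inInterval_of_length_eq_dist p (by simp [p, hdist]) (by simp [p])

lemma inInterval_of_adj_of_adj_of_adj (h₁ : H.Adj u m) (h₂ : H.Adj m m') (h₃ : H.Adj m' w)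
    (hna : ¬H.Adj u w) (hcommon : ∀ z, ¬(H.Adj u z ∧ H.Adj z w)) : inInterval H u w m := by
  let p : H.Walk u w := .cons h₁ (.cons h₂ (.cons h₃ .nil))
  have hne : u ≠ w := by rintro rfl; exact hcommon m ⟨h₁, h₁.symm⟩
  have hlt : (2 : ℕ∞) < H.dist u w := by
    rw [p.reachable.coe_dist_eq_edist, two_lt_edist_iff]
    refine ⟨hne, hna, Set.eq_empty_of_forall_notMem fun z hz => hcommon z ?_⟩
    exact ⟨hz.1, hz.2.symm⟩
  have hle : H.dist u w ≤ 3 := by simpa [p] using dist_le p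
  have hdist : H.dist u w = 3 := by norm_cast at hlt; omega
  exact inInterval_of_length_eq_dist p (by simp [p, hdist]) (by simp [p])

end Interval

section Prism

variable {V : Type*} {G : SimpleGraph V}

@[simp] lemma compPrism_adj_inl_inl {a b : V} :
    (compPrism G).Adj (.inl a) (.inl b) ↔ G.Adj a b := Iff.rfl

@[simp] lemma compPrism_adj_inl_inr {a b : V} :
    (compPrism G).Adj (.inl a) (.inr b) ↔ a = b := Iff.rfl

@[simp] lemma compPrism_adj_inr_inl {a b : V} :
    (compPrism G).Adj (.inr a) (.inl b) ↔ a = b := Iff.rfl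

@[simp] lemma compPrism_adj_inr_inr {a b : V} :
    (compPrism G).Adj (.inr a) (.inr b) ↔ a ≠ b ∧ ¬G.Adj a b := compl_adj G a b

lemma compPrism_dist_inl_inl_le_three (a b : V) : (compPrism G).dist (.inl a) (.inl b) ≤ 3 := by
  by_cases hab : a = b
  · simp [hab]
  by_cases hadj : G.Adj a b
  · exact (dist_eq_one_iff_adj.mpr (compPrism_adj_inl_inl.mpr hadj)).trans_le (by norm_num)
  have h₁ : (compPrism G).Adj (.inl a) (.inr a) := rfl
  have h₂ : (compPrism G).Adj (.inr a) (.inr b) := by simp [hab, hadj]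
  have h₃ : (compPrism G).Adj (.inr b) (.inl b) := rfl
  simpa using dist_le (.cons h₁ (.cons h₂ (.cons h₃ .nil)))

lemma compPrism_dist_le_two (hG : ¬G.Preconnected) :
    ∀ (u : V ⊕ V) (b : V), (compPrism G).dist u (.inr b) ≤ 2
  | .inl a, b => by
    by_cases hab : a = b
    · exact (dist_eq_one_iff_adj.mpr (compPrism_adj_inl_inr.mpr hab)).trans_le (by norm_num)
    by_cases hadj : G.Adj a b
    · exact dist_le_two_of_adj_of_adj (compPrism_adj_inl_inl.mpr hadj) rfl
    · exact dist_le_two_of_adj_of_adj (compPrism_adj_inl_inr.mpr rfl)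
        (compPrism_adj_inr_inr.mpr ⟨hab, hadj⟩)
  | .inr a, b => by
    by_cases hab : a = b
    · simp [hab]
    by_cases hadj : G.Adj a b
    · obtain ⟨z, hz⟩ := exists_not_reachable_of_not_preconnected_s2 hG a
      have hza : a ≠ z := by rintro rfl; exact hz .rfl
      have hzb : z ≠ b := by rintro rfl; exact hz hadj.reachable
      refine dist_le_two_of_adj_of_adj (m := .inr z) ?_ ?_
      · simpa [hza] using fun h => hz h.reachable
      · simpa [hzb] using fun h => hz (hadj.reachable.trans h.reachable.symm)
    · exact (dist_eq_one_iff_adj.mpr (compPrism_adj_inr_inr.mpr ⟨hab, hadj⟩)).trans_le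
        (by norm_num)

lemma compPrism_dist_le_three (hG : ¬G.Preconnected) :
    ∀ u w : V ⊕ V, (compPrism G).dist u w ≤ 3
  | .inl a, .inl b => compPrism_dist_inl_inl_le_three a b
  | u, .inr b => (compPrism_dist_le_two hG u b).trans (by norm_num)
  | .inr a, w => by
    rw [SimpleGraph.dist_comm]
    exact (compPrism_dist_le_two hG w a).trans (by norm_num)

theorem isGeodConvex_compl_image_inl_supp (hG : ¬G.Preconnected) (C : G.ConnectedComponent) :
    IsGeodConvex (compPrism G) (Sum.inl '' C.supp)ᶜ := by
  rintro u hu w hw _ ⟨p, -, hlen, hv⟩ ⟨x, hx, rfl⟩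
  have hnbr : ∀ y ∉ Sum.inl '' C.supp, (compPrism G).Adj y (.inl x) → y = .inr x := by
    rintro (b | b) hb hadj
    · refine absurd ⟨b, ?_, rfl⟩ hb
      rw [C.mem_supp_iff] at hx ⊢
      exact (ConnectedComponent.eq.mpr (compPrism_adj_inl_inl.mp hadj).reachable).trans hx
    · rw [compPrism_adj_inr_inl.mp hadj]
  have hu' : Sum.inl x ≠ u := fun h => hu ⟨x, hx, h⟩
  have hw' : Sum.inl x ≠ w := fun h => hw ⟨x, hx, h⟩
  have hinr : u = .inr x ∨ w = .inr x := by
    rcases p.mem_support_of_length_le_three (hlen ▸ compPrism_dist_le_three hG u w) hv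
      with h | h | h | h
    exacts [(hu' h).elim, (hw' h).elim, .inl (hnbr u hu h), .inr (hnbr w hw h.symm)]
  have hlen₂ : p.length ≤ 2 := by
    rw [hlen]
    rcases hinr with rfl | rfl
    · rw [SimpleGraph.dist_comm]; exact compPrism_dist_le_two hG w x
    · exact compPrism_dist_le_two hG u x
  obtain ⟨h₁, h₂⟩ : (compPrism G).Adj u (.inl x) ∧ (compPrism G).Adj (.inl x) w := by
    rcases p.mem_support_of_length_le_two hlen₂ hv with h | h | h
    exacts [(hu' h).elim, (hw' h).elim, h]
  obtain rfl := hnbr u hu h₁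
  obtain rfl := hnbr w hw h₂.symm
  cases p <;> simp_all

end Prism

section ConvexSet

variable {V : Type*} {G : SimpleGraph V} {S : Set (V ⊕ V)}

lemma IsGeodConvex.inl_mem_of_adj (hS : IsGeodConvex (compPrism G) S) {c x : V}
    (hc : Sum.inl c ∈ S) (hcx : G.Adj c x) (hx : Sum.inr x ∈ S) : Sum.inl x ∈ S :=
  hS _ hc _ hx _ <| inInterval_of_adj_of_adj (compPrism_adj_inl_inl.mpr hcx)
    (compPrism_adj_inl_inr.mpr rfl) (by simp) (by simpa using hcx.ne)

lemma IsGeodConvex.inr_mem_of_not_adj (hS : IsGeodConvex (compPrism G) S) {x y z : V}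
    (hx : Sum.inr x ∈ S) (hy : Sum.inr y ∈ S) (hxy : G.Adj x y) (hzx : ¬G.Adj z x)
    (hzy : ¬G.Adj z y) : Sum.inr z ∈ S := by
  by_cases hz : z = x
  · rwa [hz]
  by_cases hz' : z = y
  · rwa [hz']
  exact hS _ hx _ hy _ <| inInterval_of_adj_of_adj
    (compPrism_adj_inr_inr.mpr ⟨Ne.symm hz, fun h => hzx h.symm⟩)
    (compPrism_adj_inr_inr.mpr ⟨hz', hzy⟩) (by simpa using hxy.ne) (by simp [hxy])

lemma IsGeodConvex.inl_mem_of_adj_of_adj (hS : IsGeodConvex (compPrism G) S) {x y z : V}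
    (hx : Sum.inl x ∈ S) (hy : Sum.inl y ∈ S) (hne : x ≠ y) (hxy : ¬G.Adj x y)
    (hxz : G.Adj x z) (hzy : G.Adj z y) : Sum.inl z ∈ S :=
  hS _ hx _ hy _ <| inInterval_of_adj_of_adj (compPrism_adj_inl_inl.mpr hxz)
    (compPrism_adj_inl_inl.mpr hzy) (by simpa using hne) (by simpa using hxy)

lemma IsGeodConvex.inr_mem_of_not_reachable (hS : IsGeodConvex (compPrism G) S) {x y : V}
    (hx : Sum.inl x ∈ S) (hy : Sum.inl y ∈ S) (hxy : ¬G.Reachable x y) : Sum.inr x ∈ S := by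
  have hne : x ≠ y := by rintro rfl; exact hxy .rfl
  refine hS _ hx _ hy _ <| inInterval_of_adj_of_adj_of_adj (m' := .inr y)
    (compPrism_adj_inl_inr.mpr rfl) (compPrism_adj_inr_inr.mpr ⟨hne, fun h => hxy h.reachable⟩)
    (compPrism_adj_inr_inl.mpr rfl) (by simpa using fun h => hxy h.reachable) ?_
  rintro (z | z) ⟨h₁, h₂⟩
  · exact hxy <|
      (compPrism_adj_inl_inl.mp h₁).reachable.trans (compPrism_adj_inl_inl.mp h₂).reachable
  · exact hne ((compPrism_adj_inl_inr.mp h₁).trans (compPrism_adj_inr_inl.mp h₂))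

end ConvexSet

section MeetingEveryComponent

variable {V : Type*} {G : SimpleGraph V} {S : Set (V ⊕ V)}

lemma IsGeodConvex.inr_mem_of_inl_mem (hS : IsGeodConvex (compPrism G) S)
    (hG : ¬G.Preconnected) (hmeets : ∀ x, ∃ y, G.Reachable x y ∧ Sum.inl y ∈ S) {x : V}
    (hx : Sum.inl x ∈ S) : Sum.inr x ∈ S := by
  obtain ⟨z, hz⟩ := exists_not_reachable_of_not_preconnected_s2 hG x
  obtain ⟨y, hzy, hy⟩ := hmeets z
  exact hS.inr_mem_of_not_reachable hx hy fun hxy => hz (hxy.trans hzy.symm)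

lemma IsGeodConvex.exists_reachable_inl_notMem_inr_notMem
    (hS : IsGeodConvex (compPrism G) S) (hmeets : ∀ x, ∃ y, G.Reachable x y ∧ Sum.inl y ∈ S)
    {a₀ : V} (ha₀ : Sum.inl a₀ ∉ S) :
    ∃ a, G.Reachable a₀ a ∧ Sum.inl a ∉ S ∧ Sum.inr a ∉ S := by
  classical
  obtain ⟨y, ⟨p⟩, hy⟩ := hmeets a₀
  obtain ⟨d, hd, hfst, hsnd⟩ :=
    p.exists_boundary_dart {v | Sum.inl v ∉ S} ha₀ (by simpa using hy)
  simp only [Set.mem_ofPred_eq, not_not] at hfst hsnd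
  refine ⟨d.fst, (p.takeUntil _ (p.dart_fst_mem_support_of_mem_darts hd)).reachable, hfst,
    fun h => hfst (hS.inl_mem_of_adj hsnd d.adj.symm h)⟩

lemma IsGeodConvex.adj_or_adj_of_inr_notMem (hS : IsGeodConvex (compPrism G) S)
    (hG : ¬G.Preconnected) (hmeets : ∀ x, ∃ y, G.Reachable x y ∧ Sum.inl y ∈ S) {a x y : V}
    (ha : Sum.inr a ∉ S) (hx : Sum.inl x ∈ S) (hy : Sum.inl y ∈ S) (hxy : G.Adj x y) :
    G.Adj a x ∨ G.Adj a y := by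
  by_contra! h
  exact ha <| hS.inr_mem_of_not_adj (hS.inr_mem_of_inl_mem hG hmeets hx)
    (hS.inr_mem_of_inl_mem hG hmeets hy) hxy h.1 h.2

lemma IsGeodConvex.not_adj_of_inl_mem (hS : IsGeodConvex (compPrism G) S)
    (hG : ¬G.Preconnected) (hmeets : ∀ x, ∃ y, G.Reachable x y ∧ Sum.inl y ∈ S)
    (hiso : ∀ v, ¬G.IsIsolated v) {a₀ : V} (ha₀ : Sum.inl a₀ ∉ S) {x y : V}
    (hx : Sum.inl x ∈ S) (hy : Sum.inl y ∈ S) : ¬G.Adj x y := by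
  intro hxy
  have hreach : ∀ a, Sum.inr a ∉ S → G.Reachable x a := fun a ha =>
    (hS.adj_or_adj_of_inr_notMem hG hmeets ha hx hy hxy).elim (fun h => h.reachable.symm)
      fun h => hxy.reachable.trans h.reachable.symm
  obtain ⟨z, hz⟩ := exists_not_reachable_of_not_preconnected_s2 hG x
  obtain ⟨m, hzm⟩ := G.neighborSet_nonempty.mpr (hiso z)
  obtain ⟨a, ha, hza⟩ : ∃ a, Sum.inr a ∉ S ∧ G.Reachable z a := by
    by_cases hzS : Sum.inl z ∈ S
    · by_cases hmS : Sum.inl m ∈ S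
      · obtain ⟨a, -, -, ha⟩ := hS.exists_reachable_inl_notMem_inr_notMem hmeets ha₀
        refine ⟨a, ha, ?_⟩
        rcases hS.adj_or_adj_of_inr_notMem hG hmeets ha hzS hmS hzm with h | h
        exacts [h.reachable.symm, hzm.reachable.trans h.reachable.symm]
      · obtain ⟨a, hma, -, ha⟩ := hS.exists_reachable_inl_notMem_inr_notMem hmeets hmS
        exact ⟨a, ha, hzm.reachable.trans hma⟩
    · obtain ⟨a, hza, -, ha⟩ := hS.exists_reachable_inl_notMem_inr_notMem hmeets hzS
      exact ⟨a, ha, hza⟩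
  exact hz ((hreach a ha).trans hza.symm)

lemma IsGeodConvex.card_le_ncard_compl [Finite V] (hS : IsGeodConvex (compPrism G) S)
    (hG : ¬G.Preconnected) (hmeets : ∀ x, ∃ y, G.Reachable x y ∧ Sum.inl y ∈ S)
    (hiso : ∀ v, ¬G.IsIsolated v) (hne : S ≠ Set.univ) : Nat.card V ≤ Sᶜ.ncard := by
  classical
  obtain ⟨a₀, ha₀⟩ : ∃ a₀, Sum.inl a₀ ∉ S := by
    obtain ⟨a | b, hv⟩ := Set.nonempty_compl.mpr hne
    · exact ⟨a, hv⟩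
    · exact ⟨b, fun h => hv (hS.inr_mem_of_inl_mem hG hmeets h)⟩
  have hindep : ∀ {x y}, Sum.inl x ∈ S → Sum.inl y ∈ S → ¬G.Adj x y :=
    hS.not_adj_of_inl_mem hG hmeets hiso ha₀
  choose nbr hnbr using fun v => G.neighborSet_nonempty.mpr (hiso v)
  have hnbr_inl : ∀ x, Sum.inl x ∈ S → Sum.inl (nbr x) ∉ S := fun x hx h =>
    hindep hx h (hnbr x)
  have hnbr_inr : ∀ x, Sum.inl x ∈ S → Sum.inr (nbr x) ∉ S := fun x hx h =>
    hnbr_inl x hx (hS.inl_mem_of_adj hx (hnbr x) h)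
  let g : V → V ⊕ V := fun x => if Sum.inl x ∈ S then .inr (nbr x) else .inl x
  have hg : ∀ x, g x ∈ Sᶜ := fun x => by
    by_cases hx : Sum.inl x ∈ S <;> simp [g, hx, hnbr_inr]
  have hginj : Function.Injective g := by
    intro x y hxy
    by_cases hx : Sum.inl x ∈ S <;> by_cases hy : Sum.inl y ∈ S <;> simp [g, hx, hy] at hxy
    · by_contra h
      exact hnbr_inl x hx <|
        hS.inl_mem_of_adj_of_adj hx hy h (hindep hx hy) (hnbr x) (hxy ▸ (hnbr y).symm)
    · exact hxy
  calc Nat.card V = (Set.univ : Set V).ncard := (Set.ncard_univ V).symm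
    _ ≤ Sᶜ.ncard := Set.ncard_le_ncard_of_injOn g (fun x _ => hg x) hginj.injOn

end MeetingEveryComponent

theorem IsGeodConvex.le_ncard_compl {V : Type*} [Finite V] {G : SimpleGraph V}
    {S : Set (V ⊕ V)} (hS : IsGeodConvex (compPrism G) S) (hG : ¬G.Preconnected)
    (hne : S ≠ Set.univ) {k : ℕ} (hk : ∀ C : G.ConnectedComponent, k ≤ C.supp.ncard) :
    k ≤ Sᶜ.ncard := by
  have hpos : 0 < Sᶜ.ncard := (Set.ncard_pos (Set.toFinite _)).mpr (Set.nonempty_compl.mpr hne)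
  by_cases hiso : ∃ v, G.IsIsolated v
  · obtain ⟨v, hv⟩ := hiso
    have := hk (G.connectedComponentMk v)
    rw [hv.connectedComponentMk_supp, Set.ncard_singleton] at this
    omega
  push Not at hiso
  by_cases hmeets : ∀ x, ∃ y, G.Reachable x y ∧ Sum.inl y ∈ S
  · obtain ⟨v, -⟩ := Set.nonempty_compl.mpr hne
    calc k ≤ (G.connectedComponentMk (v.elim id id)).supp.ncard := hk _
      _ ≤ Nat.card V := Set.ncard_le_card _
      _ ≤ Sᶜ.ncard := hS.card_le_ncard_compl hG hmeets hiso hne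
  · push Not at hmeets
    obtain ⟨x, hx⟩ := hmeets
    calc k ≤ (G.connectedComponentMk x).supp.ncard := hk _
      _ = (Sum.inl '' (G.connectedComponentMk x).supp).ncard :=
        (Set.ncard_image_of_injective _ Sum.inl_injective).symm
      _ ≤ Sᶜ.ncard := Set.ncard_le_ncard <| by
        rintro _ ⟨y, hy, rfl⟩
        exact hx y (ConnectedComponent.eq.mp hy).symm

theorem stmt2 {V : Type*} [Fintype V] (G : SimpleGraph V)
    (hdisc : ¬G.Preconnected)
    (c₀ : G.ConnectedComponent)
    (hmin : ∀ c : G.ConnectedComponent, c₀.supp.ncard ≤ c.supp.ncard) :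
    convexityNumber (compPrism G) = 2 * Fintype.card V - c₀.supp.ncard := by
  have hcard : Nat.card (V ⊕ V) = 2 * Fintype.card V := by
    rw [Nat.card_sum, Nat.card_eq_fintype_card]; ring
  refine IsGreatest.csSup_eq ⟨⟨_, isGeodConvex_compl_image_inl_supp hdisc c₀, ?_, ?_⟩, ?_⟩
  · exact Set.compl_ne_univ.mpr (c₀.nonempty_supp.image _)
  · rw [Set.ncard_compl, hcard, Set.ncard_image_of_injective _ Sum.inl_injective]
  · rintro _ ⟨S, hS, hne, rfl⟩
    have := hS.le_ncard_compl hdisc hne hmin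
    have := Set.ncard_add_ncard_compl S
    omega
end
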